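/- Admissibility of the ID axiom: in any LIiP-model, the formula □_M φ → ¬¬(k_M ∧ φ) is valid, where k_M is the atom 'CM knows M' interpreted by V(k_M) = {s : M ∈ K(s)}. -/
import Mathlib


/-- Modal formulas with a message-indexed box and knowledge atoms `k_M`. -/
inductive MForm (Msg : Type) : Type where
  | atom : Nat → MForm Msg
  | know : Msg → MForm Msg
  | and : MForm Msg → MForm Msg → MForm Msg
  | or : MForm Msg → MForm Msg → MForm Msg
  | neg : MForm Msg → MForm Msg
  | imp : MForm Msg → MForm Msg → MForm Msg
  | box : Msg → MForm Msg → MForm Msg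

/-- An LIiP-model with a knowledge base `K`, satisfying MIAR-inclusion,
special transitivity, seriality, the epistemic-image property, and conditional
reflexivity; `k_M` is interpreted by `V(k_M) = {s : M ∈ K s}`. -/
structure LIiPModel (Msg : Type) where
  S : Type
  le : S → S → Prop
  le_refl : ∀ s, le s s
  le_trans : ∀ s t u, le s t → le t u → le s u
  le_antisymm : ∀ s t, le s t → le t s → s = t
  cm : Msg
  R : Msg → S → S → Prop
  miar_incl : ∀ m s t, R m s t → R cm s t
  miar_eq : ∀ s t, R cm s t ↔ le s t
  special_trans : ∀ m s t u, R cm s t → R m t u → R m s u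
  K : S → Set Msg
  serial : ∀ m s, ∃ t, R m s t
  epi_image : ∀ m s t, R m s t → m ∈ K t
  cond_refl : ∀ m s, m ∈ K s → R m s s
  V : Nat → S → Prop
  V_mono : ∀ n s t, le s t → V n s → V n t

/-- Intuitionistic Kripke satisfaction for LIiP. -/
def sat {Msg : Type} (M : LIiPModel Msg) : MForm Msg → M.S → Prop
  | .atom n, s => M.V n s
  | .know m, s => m ∈ M.K s
  | .and a b, s => sat M a s ∧ sat M b s
  | .or a b, s => sat M a s ∨ sat M b s
  | .neg a, s => ∀ t, M.le s t → ¬ sat M a t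
  | .imp a b, s => ∀ t, M.le s t → sat M a t → sat M b t
  | .box m a, s => ∀ t, M.R m s t → sat M a t

/-- Admissibility of ID: in any LIiP-model (in which the Monotonicity Lemma
holds), the formula `□_M φ → ¬¬(k_M ∧ φ)` is valid. -/
theorem id_admissible {Msg : Type} (M : LIiPModel Msg)
    (mono : ∀ (φ : MForm Msg) (s t : M.S), M.le s t → sat M φ s → sat M φ t) :
    ∀ (m : Msg) (φ : MForm Msg) (s : M.S),
      sat M (.imp (.box m φ) (.neg (.neg (.and (.know m) φ)))) s := by
  intro m φ s t hst hbox u htu hneg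
  obtain ⟨w, hw⟩ := M.serial m u
  have huw : M.le u w := (M.miar_eq u w).mp (M.miar_incl m u w hw)
  have hboxu : sat M (.box m φ) u := mono _ t u htu hbox
  exact hneg w huw ⟨M.epi_image m u w hw, hboxu w hw⟩
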